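/- arXiv:2505.16893 — 3 statements merged into one kernel-verified Lean document; each statement's English description precedes it below -/
import Mathlib

section
/- Let Z be a real random variable with continuous strictly increasing cumulative distribution function F, and let 𝒵 ⊆ ℝ be a measurable set with P(Z ∈ 𝒵) > 0. Define the truncated CDF F_𝒵(t) = P(Z ≤ t, Z ∈ 𝒵)/P(Z ∈ 𝒵). Then, conditional on the event {Z ∈ 𝒵}, the random variable U = F_𝒵(Z) is uniformly distributed on (0,1): for all α ∈ (0,1), P(F_𝒵(Z) ≤ α | Z ∈ 𝒵) = α. -/
/-! The law `μ` of `Z` restricted to `𝒵` is dominated by the law of `Z`, so the increments of its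
CDF `G t = μ (Iic t)` are bounded by those of `F`, and `G` is continuous. Being also monotone,
rising from `0` to `μ ℝ = P(Z ∈ 𝒵)`, `G` has sublevel set `{G ≤ α μ ℝ} = Iic t` for a point `t`
with `G t = α μ ℝ`. Hence `μ {G ≤ α μ ℝ} = α μ ℝ`, and dividing by `P(Z ∈ 𝒵)` gives `α`. -/

open MeasureTheory ProbabilityTheory Filter Set Topology

lemma Monotone.exists_preimage_Iic_eq_Iic {g : ℝ → ℝ} (hmono : Monotone g) (hcont : Continuous g)
    {a b c : ℝ} (hb : g b < a) (hc : a < g c) : ∃ t, g t = a ∧ g ⁻¹' Iic a = Iic t := by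
  set S := g ⁻¹' Iic a
  have hSne : S.Nonempty := ⟨b, hb.le⟩
  have hcS : c ∈ upperBounds S := fun x hx ↦ (hmono.reflect_lt (hx.trans_lt hc)).le
  have hmem : sSup S ∈ S := (isClosed_Iic.preimage hcont).csSup_mem hSne ⟨c, hcS⟩
  refine ⟨sSup S, le_antisymm hmem ?_,
    Subset.antisymm (fun x hx ↦ le_csSup ⟨c, hcS⟩ hx) (fun x hx ↦ (hmono hx).trans hmem)⟩
  obtain ⟨y, hy, hgy⟩ :=
    intermediate_value_Icc (csSup_le hSne hcS) hcont.continuousOn ⟨hmem, hc.le⟩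
  have hy_le : y ≤ sSup S := le_csSup ⟨c, hcS⟩ (show g y ≤ a from hgy.le)
  rw [← hgy, le_antisymm hy_le hy.1]

namespace MeasureTheory

variable {μ ν : Measure ℝ}

lemma monotone_measureReal_Iic [IsFiniteMeasure μ] : Monotone fun t ↦ μ.real (Iic t) :=
  fun _ _ hst ↦ measureReal_mono (Iic_subset_Iic.2 hst)

lemma measureReal_Iic_sub_measureReal_Iic [IsFiniteMeasure μ] {s t : ℝ} (hst : s ≤ t) :
    μ.real (Iic t) - μ.real (Iic s) = μ.real (Ioc s t) := by
  have hdiff : Iic t \ Iic s = Ioc s t := by ext; simp [and_comm]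
  rw [← hdiff, measureReal_sdiff (Iic_subset_Iic.2 hst) measurableSet_Iic]

lemma abs_sub_measureReal_Iic_le_of_le [IsFiniteMeasure μ] (hνμ : ν ≤ μ) (s t : ℝ) :
    |ν.real (Iic s) - ν.real (Iic t)| ≤ |μ.real (Iic s) - μ.real (Iic t)| := by
  have : IsFiniteMeasure ν := isFiniteMeasure_of_le μ hνμ
  wlog hst : s ≤ t generalizing s t with H
  · rw [abs_sub_comm, abs_sub_comm (μ.real _)]
    exact H t s (le_of_not_ge hst)
  rw [abs_sub_comm, abs_sub_comm (μ.real _), measureReal_Iic_sub_measureReal_Iic hst,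
    measureReal_Iic_sub_measureReal_Iic hst, abs_of_nonneg measureReal_nonneg,
    abs_of_nonneg measureReal_nonneg]
  exact ENNReal.toReal_mono (measure_ne_top _ _) (hνμ _)

lemma continuous_measureReal_Iic_of_le [IsFiniteMeasure μ] (hνμ : ν ≤ μ)
    (hμ : Continuous fun t ↦ μ.real (Iic t)) : Continuous fun t ↦ ν.real (Iic t) := by
  refine continuous_iff_continuousAt.2 fun x ↦ tendsto_iff_dist_tendsto_zero.2 ?_
  exact squeeze_zero (fun _ ↦ dist_nonneg) (fun y ↦ abs_sub_measureReal_Iic_le_of_le hνμ y x)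
    (tendsto_iff_dist_tendsto_zero.1 (hμ.tendsto x))

lemma tendsto_measure_Iic_atBot (μ : Measure ℝ) [IsFiniteMeasure μ] :
    Tendsto (fun x ↦ μ (Iic x)) atBot (𝓝 0) := by
  have h := tendsto_measure_iInter_atBot (μ := μ) (fun x : ℝ ↦ measurableSet_Iic.nullMeasurableSet)
    monotone_Iic ⟨0, measure_ne_top _ _⟩
  rwa [iInter_Iic_eq_empty_iff.2 (range_id' ▸ not_bddBelow_univ), measure_empty] at h

theorem measure_setOf_measureReal_Iic_le [IsFiniteMeasure μ]
    (hμ : Continuous fun t ↦ μ.real (Iic t)) {a : ℝ} (ha₀ : 0 < a) (ha : a < μ.real univ) :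
    μ {x | μ.real (Iic x) ≤ a} = ENNReal.ofReal a := by
  obtain ⟨b, hb⟩ := (((ENNReal.tendsto_toReal ENNReal.zero_ne_top).comp
    (tendsto_measure_Iic_atBot μ)).eventually (eventually_lt_nhds ha₀)).exists
  obtain ⟨c, hc⟩ := (((ENNReal.tendsto_toReal (measure_ne_top μ univ)).comp
    (tendsto_measure_Iic_atTop μ)).eventually (eventually_gt_nhds ha)).exists
  obtain ⟨t, ht, hpre⟩ := monotone_measureReal_Iic.exists_preimage_Iic_eq_Iic hμ hb hc
  change μ ((fun x ↦ μ.real (Iic x)) ⁻¹' Iic a) = _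
  rw [hpre, ← ht, ofReal_measureReal]

end MeasureTheory

theorem stmt_4_general {Ω : Type*} [MeasurableSpace Ω] (P : Measure Ω) [IsProbabilityMeasure P]
    (Z : Ω → ℝ) (hZ : Measurable Z)
    (F : ℝ → ℝ) (hF : F = fun t => (P {ω | Z ω ≤ t}).toReal)
    (hFc : Continuous F)
    (𝒵 : Set ℝ) (h𝒵 : MeasurableSet 𝒵) (hpos : 0 < P {ω | Z ω ∈ 𝒵})
    (Ft : ℝ → ℝ)
    (hFt : Ft = fun t =>
      (P {ω | Z ω ≤ t ∧ Z ω ∈ 𝒵}).toReal / (P {ω | Z ω ∈ 𝒵}).toReal)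
    (α : ℝ) (hα : α ∈ Set.Ioo (0:ℝ) 1) :
    P[|{ω | Z ω ∈ 𝒵}] {ω | Ft (Z ω) ≤ α} = ENNReal.ofReal α := by
  set E := {ω | Z ω ∈ 𝒵}
  set μ := (P.map Z).restrict 𝒵
  have hμ_apply (s : Set ℝ) (hs : MeasurableSet s) : μ s = P (Z ⁻¹' s ∩ E) := by
    rw [Measure.restrict_apply hs, Measure.map_apply hZ (hs.inter h𝒵)]; rfl
  have hF_map : F = fun t ↦ (P.map Z).real (Iic t) := by
    ext t; rw [hF, measureReal_def, Measure.map_apply hZ measurableSet_Iic]; rfl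
  have hμ_cont : Continuous fun t ↦ μ.real (Iic t) :=
    continuous_measureReal_Iic_of_le Measure.restrict_le_self (hF_map ▸ hFc)
  have hFt_μ (t : ℝ) : Ft t = μ.real (Iic t) / P.real E := by
    rw [hFt, measureReal_def, hμ_apply _ measurableSet_Iic]; rfl
  have hμ_univ : μ.real univ = P.real E := by
    rw [measureReal_def, hμ_apply _ MeasurableSet.univ, preimage_univ, univ_inter]; rfl
  have hE : 0 < P.real E := ENNReal.toReal_pos hpos.ne' (measure_ne_top _ _)
  have hevent : E ∩ {ω | Ft (Z ω) ≤ α} = Z ⁻¹' {x | μ.real (Iic x) ≤ α * P.real E} ∩ E := by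
    ext ω; simp [E, hFt_μ, div_le_iff₀ hE, and_comm]
  rw [cond_apply (show MeasurableSet E from hZ h𝒵), hevent,
    ← hμ_apply _ (measurableSet_le hμ_cont.measurable measurable_const),
    measure_setOf_measureReal_Iic_le hμ_cont (mul_pos hα.1 hE)
      (by rw [hμ_univ]; nlinarith [hα.2]),
    ENNReal.ofReal_mul hα.1.le, ofReal_measureReal, mul_left_comm,
    ENNReal.inv_mul_cancel hpos.ne' (measure_ne_top _ _), mul_one]

/-- Truncated probability integral transform: if `Z` has continuous strictly increasing CDF
`F` and `𝒵` is measurable with `P(Z ∈ 𝒵) > 0`, then conditionally on `{Z ∈ 𝒵}` the random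
variable `F_𝒵(Z)`, with `F_𝒵(t) = P(Z ≤ t, Z ∈ 𝒵)/P(Z ∈ 𝒵)`, is uniform on `(0,1)`. -/
theorem stmt_4 {Ω : Type*} [MeasurableSpace Ω] (P : Measure Ω) [IsProbabilityMeasure P]
    (Z : Ω → ℝ) (hZ : Measurable Z)
    (F : ℝ → ℝ) (hF : F = fun t => (P {ω | Z ω ≤ t}).toReal)
    (hFc : Continuous F) (hFm : StrictMono F)
    (𝒵 : Set ℝ) (h𝒵 : MeasurableSet 𝒵) (hpos : 0 < P {ω | Z ω ∈ 𝒵})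
    (Ft : ℝ → ℝ)
    (hFt : Ft = fun t =>
      (P {ω | Z ω ≤ t ∧ Z ω ∈ 𝒵}).toReal / (P {ω | Z ω ∈ 𝒵}).toReal)
    (α : ℝ) (hα : α ∈ Set.Ioo (0:ℝ) 1) :
    P[|{ω | Z ω ∈ 𝒵}] {ω | Ft (Z ω) ≤ α} = ENNReal.ofReal α :=
  stmt_4_general P Z hZ F hF hFc 𝒵 h𝒵 hpos Ft hFt α hα
end

section
/- Let Z ~ N(0,1) and let 𝒵 ⊆ ℝ be a Borel set with P(Z ∈ 𝒵) > 0 that is symmetric about 0 (𝒵 = -𝒵). Define, for observed value z₀ ∈ 𝒵, the two-sided selective p-value p(z₀) = P(|Z| ≥ |z₀| | Z ∈ 𝒵). Then conditional on {Z ∈ 𝒵}, p(Z) satisfies P(p(Z) ≤ α | Z ∈ 𝒵) = α for all α ∈ (0,1). -/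
/-!
Write `G t = P(|Z| ≥ t | Z ∈ 𝒵)`, so that `p(z) = G |z|`: the claim is the probability integral
transform for the survival function of `|Z|` under the conditional law. With
`t₀ = inf {t | G t ≤ α}`, the event `{G |Z| ≤ α}` lies between `{|Z| > t₀}` and `{|Z| ≥ t₀}`,
which have the same probability `G t₀` because `|Z|` has no atoms. Continuity of measure from
below gives `G t₀ ≤ α`, as `G t ≤ α` for `t > t₀`; continuity from above gives `G t₀ ≥ α`, as
`G t > α` for `t < t₀`.
-/

open MeasureTheory ProbabilityTheory Set Filter
open scoped ProbabilityTheory ENNReal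

section SurvivalFunction

variable {ν : Measure ℝ}

theorem measure_Ioi_le_of_forall_gt {a : ℝ} {β : ℝ≥0∞} (h : ∀ x, a < x → ν (Ici x) ≤ β) :
    ν (Ioi a) ≤ β := by
  obtain ⟨u, hu_anti, hu_gt, hu_lim⟩ := exists_seq_strictAnti_tendsto a
  have hmono : Monotone fun n => Ici (u n) := fun _ _ h => Ici_subset_Ici.2 (hu_anti.antitone h)
  rw [← iUnion_Ici_eq_Ioi_of_lt_of_tendsto hu_gt hu_lim, hmono.measure_iUnion]
  exact iSup_le fun n => h _ (hu_gt n)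

theorem le_measure_Ici_of_forall_lt [IsFiniteMeasure ν] {a : ℝ} {β : ℝ≥0∞}
    (h : ∀ x < a, β ≤ ν (Ici x)) : β ≤ ν (Ici a) := by
  obtain ⟨u, hu_mono, hu_lt, hu_lim⟩ := exists_seq_strictMono_tendsto a
  have hIci : ⋂ n, Ici (u n) = Ici a := by
    ext y
    simp only [mem_iInter, mem_Ici]
    exact ⟨le_of_tendsto' hu_lim, fun hy n => (hu_lt n).le.trans hy⟩
  have hanti : Antitone fun n => Ici (u n) := fun _ _ h => Ici_subset_Ici.2 (hu_mono.monotone h)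
  rw [← hIci, hanti.measure_iInter (fun _ => measurableSet_Ici.nullMeasurableSet)
    ⟨0, measure_ne_top _ _⟩]
  exact le_iInf fun n => h _ (hu_lt n)

theorem iInf_measure_Ici [IsFiniteMeasure ν] : ⨅ x, ν (Ici x) = 0 := by
  have hIci_empty : ⋂ x : ℝ, Ici x = ∅ :=
    eq_empty_of_forall_notMem fun y hy => (mem_iInter.1 hy (y + 1)).not_gt (lt_add_one y)
  rw [← antitone_Ici.measure_iInter (fun _ => measurableSet_Ici.nullMeasurableSet)
    ⟨0, measure_ne_top _ _⟩, hIci_empty, measure_empty]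

theorem measure_setOf_measure_Ici_le [IsFiniteMeasure ν] [NullSingletonClass ν] {β : ℝ≥0∞}
    (hβ : β ≤ ν univ) : ν {x | ν (Ici x) ≤ β} = β := by
  set S := {x | ν (Ici x) ≤ β}
  rcases hβ.eq_or_lt with rfl | hβ
  · have hS : S = univ := eq_univ_of_forall fun x => measure_mono (subset_univ (Ici x))
    rw [hS]
  have hS_upper : IsUpperSet S := fun x y hxy hx => (measure_mono (Ici_subset_Ici.2 hxy)).trans hx
  rcases S.eq_empty_or_nonempty with hS | hS
  · have hβ0 : β ≤ ⨅ x, ν (Ici x) :=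
      le_iInf fun x => (not_le.1 (eq_empty_iff_forall_notMem.1 hS x)).le
    rw [iInf_measure_Ici, nonpos_iff_eq_zero] at hβ0
    rw [hS, measure_empty, hβ0]
  have hS_bdd : BddBelow S := by
    obtain ⟨a, ha⟩ := eventually_atBot.1
      ((tendsto_measure_Ici_atBot ν).eventually (lt_mem_nhds hβ))
    exact ⟨a, fun x hx => le_of_not_gt fun hxa => (ha x hxa.le).not_ge hx⟩
  set t₀ := sInf S
  have hIoi_sub : Ioi t₀ ⊆ S := fun x hx => by
    obtain ⟨s, hs, hsx⟩ := (csInf_lt_iff hS_bdd hS).1 hx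
    exact hS_upper hsx.le hs
  have hIoi_Ici : ν (Ioi t₀) = ν (Ici t₀) := measure_congr Ioi_ae_eq_Ici
  refine le_antisymm ?_ ?_
  · calc ν S ≤ ν (Ici t₀) := measure_mono fun x hx => csInf_le hS_bdd hx
      _ = ν (Ioi t₀) := hIoi_Ici.symm
      _ ≤ β := measure_Ioi_le_of_forall_gt fun x hx => hIoi_sub hx
  · calc β ≤ ν (Ici t₀) := le_measure_Ici_of_forall_lt fun x hx =>
          (not_le.1 fun hxS => (csInf_le hS_bdd hxS).not_gt hx).le
      _ = ν (Ioi t₀) := hIoi_Ici.symm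
      _ ≤ ν S := measure_mono hIoi_sub

end SurvivalFunction

def survivalFun {Ω : Type*} [MeasurableSpace Ω] (μ : Measure Ω) (X : Ω → ℝ) (x : ℝ) : ℝ≥0∞ :=
  μ {ω | x ≤ X ω}

theorem measure_survivalFun_le {Ω : Type*} [MeasurableSpace Ω] {μ : Measure Ω}
    [IsFiniteMeasure μ] {X : Ω → ℝ} (hX : Measurable X) (hatom : ∀ x, μ (X ⁻¹' {x}) = 0)
    {β : ℝ≥0∞} (hβ : β ≤ μ univ) : μ {ω | survivalFun μ X (X ω) ≤ β} = β := by
  set ν := μ.map X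
  have : NullSingletonClass ν :=
    ⟨fun x => by rw [Measure.map_apply hX (measurableSet_singleton x)]; exact hatom x⟩
  have hν (x : ℝ) : ν (Ici x) = survivalFun μ X x := Measure.map_apply hX measurableSet_Ici
  have hmeas : MeasurableSet {x | ν (Ici x) ≤ β} :=
    (Antitone.measurable fun _ _ h => measure_mono (Ici_subset_Ici.2 h)) measurableSet_Iic
  calc μ {ω | survivalFun μ X (X ω) ≤ β} = ν {x | ν (Ici x) ≤ β} := by
        rw [Measure.map_apply hX hmeas]
        simp only [hν]
        rfl
    _ = β := measure_setOf_measure_Ici_le (by rwa [Measure.map_apply hX .univ, preimage_univ])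

theorem stmt_6_general (𝒵 : Set ℝ)
    (hpos : 0 < gaussianReal 0 1 𝒵)
    (p : ℝ → ℝ)
    (hp : p = fun z₀ =>
      ((gaussianReal 0 1) (𝒵 ∩ {z | |z₀| ≤ |z|})).toReal / ((gaussianReal 0 1) 𝒵).toReal)
    (α : ℝ) (hα : α ∈ Set.Ioo (0:ℝ) 1) :
    (gaussianReal 0 1)[|𝒵] {z | p z ≤ α} = ENNReal.ofReal α := by
  set μ := gaussianReal 0 1
  have : IsProbabilityMeasure μ[|𝒵] := cond_isProbabilityMeasure hpos.ne'
  have : NullSingletonClass μ := nullSingletonClass_gaussianReal one_ne_zero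
  have hp_survival (z : ℝ) : p z = (survivalFun μ[|𝒵] abs |z|).toReal := by
    rw [hp, survivalFun, cond_apply' (measurableSet_le measurable_const measurable_abs),
      ENNReal.toReal_mul, ENNReal.toReal_inv, inv_mul_eq_div]
  have hatom (x : ℝ) : μ[|𝒵] (abs ⁻¹' {x}) = 0 := by
    refine cond_absolutelyContinuous (measure_mono_null (t := {x, -x}) (fun z hz => ?_)
      ((toFinite _).measure_zero μ))
    have hz : |z| = x := hz
    simp only [mem_insert_iff, mem_singleton_iff]
    rcases abs_choice z with h | h <;> [left; right] <;> linarith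
  have hset : {z | p z ≤ α} = {z | survivalFun μ[|𝒵] abs |z| ≤ ENNReal.ofReal α} := by
    ext z
    rw [mem_ofPred_eq, mem_ofPred_eq, hp_survival]
    exact (ENNReal.le_ofReal_iff_toReal_le (measure_ne_top _ _) hα.1.le).symm
  rw [hset]
  exact measure_survivalFun_le measurable_abs hatom (by simpa using hα.2.le)

/-- Conditional uniformity of the two-sided selective p-value: for `Z ~ N(0,1)` and a
symmetric Borel truncation region `𝒵` of positive probability, the p-value
`p(z₀) = P(|Z| ≥ |z₀| | Z ∈ 𝒵)` satisfies `P(p(Z) ≤ α | Z ∈ 𝒵) = α` for `α ∈ (0,1)`. -/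
theorem stmt_6 (𝒵 : Set ℝ) (h𝒵 : MeasurableSet 𝒵)
    (hsym : ∀ z : ℝ, z ∈ 𝒵 ↔ -z ∈ 𝒵)
    (hpos : 0 < gaussianReal 0 1 𝒵)
    (p : ℝ → ℝ)
    (hp : p = fun z₀ =>
      ((gaussianReal 0 1) (𝒵 ∩ {z | |z₀| ≤ |z|})).toReal / ((gaussianReal 0 1) 𝒵).toReal)
    (α : ℝ) (hα : α ∈ Set.Ioo (0:ℝ) 1) :
    (gaussianReal 0 1)[|𝒵] {z | p z ≤ α} = ENNReal.ofReal α :=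
  stmt_6_general 𝒵 hpos p hp α hα
end

section
/- Let f : ℝⁿ → ℝⁿ be piecewise affine with respect to a finite polyhedral partition, let a, b ∈ ℝⁿ, and fix thresholds τ_l < τ_u. For z ∈ ℝ define the selected pair V(z) = (V⁺(z), V⁻(z)) by thresholding f(a + bz) at τ_u and τ_l. Then for any fixed target pair V₀, the set {z ∈ ℝ : V(z) = V₀} is a finite union of intervals. -/
/-!
Each selection condition `τu < y i` or `y i ≤ τl`, and each of their negations, cuts out a
half-space once `y` is an affine function of `x`; so on every polyhedral piece of `f` the set
where the thresholded pair equals `V₀` is an intersection of the (convex) piece with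
finitely many half-spaces, hence convex. Pulling these finitely many convex sets back along
the line `z ↦ a + z • b` gives finitely many intervals.
-/

open Matrix

/-- A convex polyhedron: a finite intersection of closed half-spaces. -/
def IsPolyhedron {m : ℕ} (S : Set (Fin m → ℝ)) : Prop :=
  ∃ (k : ℕ) (c : Fin k → (Fin m → ℝ)) (d : Fin k → ℝ),
    S = {x | ∀ i, c i ⬝ᵥ x ≤ d i}

/-- A function is piecewise affine if finitely many convex polyhedra cover the domain and
the function agrees with an affine map on each of them. -/
def IsPiecewiseAffine {m k : ℕ} (f : (Fin m → ℝ) → (Fin k → ℝ)) : Prop :=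
  ∃ (N : ℕ) (R : Fin N → Set (Fin m → ℝ)),
    (∀ j, IsPolyhedron (R j)) ∧ (⋃ j, R j) = Set.univ ∧
    ∀ j, ∃ (C : Matrix (Fin k) (Fin m) ℝ) (d : Fin k → ℝ),
      ∀ x ∈ R j, f x = C.mulVec x + d

theorem convex_setOf_setOf_eq {𝕜 E ι : Type*} [Semiring 𝕜] [PartialOrder 𝕜] [AddCommMonoid E]
    [SMul 𝕜 E] {P : ι → E → Prop} (hP : ∀ i, Convex 𝕜 {x | P i x})
    (hnP : ∀ i, Convex 𝕜 {x | ¬P i x}) (A : Set ι) : Convex 𝕜 {x | {i | P i x} = A} := by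
  have h_eq_iInter : {x | {i | P i x} = A} = ⋂ i, {x | P i x ↔ i ∈ A} := by
    ext x
    simp only [Set.mem_ofPred_eq, Set.mem_iInter, Set.ext_iff]
  rw [h_eq_iInter]
  refine convex_iInter fun i => ?_
  by_cases hi : i ∈ A <;> simp only [hi, iff_true, iff_false]
  exacts [hP i, hnP i]

theorem convex_setOf_threshold_eq {E ι : Type*} [AddCommGroup E] [Module ℝ E]
    (g : E →ᵃ[ℝ] (ι → ℝ)) (τl τu : ℝ) (A B : Set ι) :
    Convex ℝ {x | {i | τu < g x i} = A ∧ {i | g x i ≤ τl} = B} := by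
  have hcoord : ∀ (i : ι) (s : Set ℝ), Convex ℝ s → Convex ℝ {x | g x i ∈ s} :=
    fun i s hs => hs.affine_preimage ((AffineMap.proj i).comp g)
  refine (convex_setOf_setOf_eq (fun i => hcoord i _ (convex_Ioi τu))
    (fun i => ?_) A).inter (convex_setOf_setOf_eq (fun i => hcoord i _ (convex_Iic τl))
    (fun i => ?_) B)
  · simpa only [Set.mem_Ioi, Set.mem_Iic, not_lt] using hcoord i _ (convex_Iic τu)
  · simpa only [Set.mem_Ioi, Set.mem_Iic, not_le] using hcoord i _ (convex_Ioi τl)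

theorem IsPolyhedron.convex {m : ℕ} {S : Set (Fin m → ℝ)} (hS : IsPolyhedron S) :
    Convex ℝ S := by
  obtain ⟨k, c, d, rfl⟩ := hS
  simpa only [Set.ofPred_forall] using convex_iInter fun i =>
    convex_halfSpace_le ⟨dotProduct_add (c i), fun r x => dotProduct_smul r (c i) x⟩ (d i)

theorem IsPiecewiseAffine.exists_iUnion_convex_eq {m k : ℕ} {f : (Fin m → ℝ) → (Fin k → ℝ)}
    (hf : IsPiecewiseAffine f) {P : (Fin k → ℝ) → Prop}
    (hP : ∀ g : (Fin m → ℝ) →ᵃ[ℝ] (Fin k → ℝ), Convex ℝ {x | P (g x)}) :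
    ∃ (N : ℕ) (K : Fin N → Set (Fin m → ℝ)), (∀ j, Convex ℝ (K j)) ∧
      {x | P (f x)} = ⋃ j, K j := by
  obtain ⟨N, R, hpoly, hcover, haff⟩ := hf
  choose C d hCd using haff
  let g : Fin N → (Fin m → ℝ) →ᵃ[ℝ] (Fin k → ℝ) := fun j =>
    (Matrix.toLin' (C j)).toAffineMap + AffineMap.const ℝ _ (d j)
  have hfg : ∀ j, ∀ x ∈ R j, f x = g j x := hCd
  refine ⟨N, fun j => R j ∩ {x | P (g j x)}, fun j => (hpoly j).convex.inter (hP (g j)), ?_⟩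
  ext x
  simp only [Set.mem_ofPred_eq, Set.mem_iUnion, Set.mem_inter_iff]
  constructor
  · intro hx
    obtain ⟨j, hj⟩ := Set.mem_iUnion.mp (hcover.symm ▸ Set.mem_univ x : x ∈ ⋃ j, R j)
    exact ⟨j, hj, hfg j x hj ▸ hx⟩
  · rintro ⟨j, hj, hx⟩
    exact (hfg j x hj).symm ▸ hx

theorem Convex.ordConnected_preimage_line {E : Type*} [AddCommGroup E] [Module ℝ E]
    {K : Set E} (hK : Convex ℝ K) (a b : E) : {z : ℝ | a + z • b ∈ K}.OrdConnected := by
  have hline : {z : ℝ | a + z • b ∈ K} = AffineMap.lineMap a (a + b) ⁻¹' K := by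
    ext z
    simp [AffineMap.lineMap_apply, add_comm]
  exact hline ▸ (hK.affine_preimage _).ordConnected

theorem stmt_18_general (n : ℕ) (f : (Fin n → ℝ) → (Fin n → ℝ)) (hf : IsPiecewiseAffine f)
    (a b : Fin n → ℝ) (τl τu : ℝ)
    (Vp Vm : ℝ → Set (Fin n))
    (hVp : Vp = fun z => {i | τu < f (a + z • b) i})
    (hVm : Vm = fun z => {i | f (a + z • b) i ≤ τl})
    (V₀ : Set (Fin n) × Set (Fin n)) :
    ∃ (N : ℕ) (I : Fin N → Set ℝ), (∀ j, (I j).OrdConnected) ∧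
      {z | Vp z = V₀.1 ∧ Vm z = V₀.2} = ⋃ j, I j := by
  obtain ⟨N, K, hK, hsel⟩ := hf.exists_iUnion_convex_eq
    (P := fun y => {i | τu < y i} = V₀.1 ∧ {i | y i ≤ τl} = V₀.2)
    fun g => convex_setOf_threshold_eq g τl τu V₀.1 V₀.2
  refine ⟨N, fun j => {z | a + z • b ∈ K j}, fun j => (hK j).ordConnected_preimage_line a b, ?_⟩
  subst hVp hVm
  ext z
  rw [Set.mem_iUnion]
  exact (Set.ext_iff.mp hsel _).trans Set.mem_iUnion

/-- For a piecewise affine `f` and thresholds `τ_l < τ_u`, the set of `z ∈ ℝ` for which the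
pair of selected subgraphs obtained by thresholding `f(a + z b)` equals a fixed target pair
`V₀` is a finite union of intervals. -/
theorem stmt_18 (n : ℕ) (f : (Fin n → ℝ) → (Fin n → ℝ)) (hf : IsPiecewiseAffine f)
    (a b : Fin n → ℝ) (τl τu : ℝ) (hτ : τl < τu)
    (Vp Vm : ℝ → Set (Fin n))
    (hVp : Vp = fun z => {i | τu < f (a + z • b) i})
    (hVm : Vm = fun z => {i | f (a + z • b) i ≤ τl})
    (V₀ : Set (Fin n) × Set (Fin n)) :
    ∃ (N : ℕ) (I : Fin N → Set ℝ), (∀ j, (I j).OrdConnected) ∧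
      {z | Vp z = V₀.1 ∧ Vm z = V₀.2} = ⋃ j, I j :=
  stmt_18_general n f hf a b τl τu Vp Vm hVp hVm V₀
end
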